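/- arXiv:2203.00870 — 6 statements merged into one kernel-verified Lean document; each statement's English description precedes it below -/
import Mathlib

section
/- For integers 1 ≤ ℓ ≤ d, let p^ℓ_t = (2ℓ−1)!·(ℓ+t−1)!·(d−t−1)! / ((ℓ−1)!)²·(d+ℓ−1)! for 0 ≤ t ≤ d−ℓ. Then Σ_{t=0}^{d−ℓ} C(d−ℓ, t)·p^ℓ_t = 1, i.e. the constants (p^ℓ_t) define a probability distribution over subsets T ⊆ [d]∖S with |S| = ℓ. -/
open Finset Finset.Nat

/-- Convolution of "negative binomial" coefficients:
`∑_{i+j=n} C(r+i,i) C(s+j,j) = C(r+s+n+1, n)`. -/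
lemma conv_choose (r : ℕ) : ∀ s n : ℕ,
    ∑ ij ∈ antidiagonal n, (r + ij.1).choose ij.1 * (s + ij.2).choose ij.2
      = (r + s + n + 1).choose n := by
  intro s
  induction s with
  | zero =>
    intro n
    rw [sum_antidiagonal_eq_sum_range_succ_mk]
    have : ∀ k ∈ range (n + 1), (r + k).choose k * (0 + (n - k)).choose (n - k)
        = (k + r).choose r := by
      intro k _
      rw [Nat.zero_add, Nat.choose_self, mul_one, Nat.add_comm r k, Nat.choose_symm_add]
    rw [Finset.sum_congr rfl this, Nat.sum_range_add_choose]
    rw [show r + 0 + n + 1 = n + r + 1 by omega]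
    rw [← Nat.choose_symm (show r + 1 ≤ n + r + 1 by omega)]
    congr 1
    omega
  | succ s ih =>
    intro n
    induction n with
    | zero => simp
    | succ n ihn =>
      have h1 := ih (n + 1)
      rw [sum_antidiagonal_succ'] at h1 ⊢
      simp only [Nat.choose_zero_right, mul_one] at h1 ⊢
      have hsplit : ∑ p ∈ antidiagonal n,
            (r + p.1).choose p.1 * ((s + 1) + (p.2 + 1)).choose (p.2 + 1)
          = (∑ p ∈ antidiagonal n, (r + p.1).choose p.1 * ((s + 1) + p.2).choose p.2)
            + ∑ p ∈ antidiagonal n, (r + p.1).choose p.1 * (s + (p.2 + 1)).choose (p.2 + 1) := by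
        rw [← Finset.sum_add_distrib]
        refine Finset.sum_congr rfl fun p _ => ?_
        rw [show (s + 1) + (p.2 + 1) = (s + 1 + p.2) + 1 by omega, Nat.choose_succ_succ,
          Nat.mul_add, show s + 1 + p.2 = s + (p.2 + 1) by omega]
      rw [hsplit, ihn]
      have hp : (r + (s + 1) + (n + 1) + 1).choose (n + 1)
          = (r + s + n + 2).choose n + (r + s + n + 2).choose (n + 1) := by
        rw [show r + (s + 1) + (n + 1) + 1 = (r + s + n + 2) + 1 by omega]
        exact Nat.choose_succ_succ _ _
      rw [hp, show r + (s + 1) + n + 1 = r + s + n + 2 by omega]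
      rw [show r + s + (n + 1) + 1 = r + s + n + 2 by omega] at h1
      omega

lemma key_nat_sum (d ℓ : ℕ) (h1 : 1 ≤ ℓ) (h2 : ℓ ≤ d) :
    ∑ t ∈ range (d - ℓ + 1),
        (d - ℓ).choose t * ((2 * ℓ - 1).factorial * (ℓ + t - 1).factorial
          * (d - t - 1).factorial)
      = (ℓ - 1).factorial ^ 2 * (d + ℓ - 1).factorial := by
  have hconv := conv_choose (ℓ - 1) (ℓ - 1) (d - ℓ)
  rw [sum_antidiagonal_eq_sum_range_succ_mk] at hconv
  have step : ∀ t ∈ range (d - ℓ + 1),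
      (d - ℓ).choose t * ((2 * ℓ - 1).factorial * (ℓ + t - 1).factorial
          * (d - t - 1).factorial)
        = ((2 * ℓ - 1).factorial * (ℓ - 1).factorial ^ 2 * (d - ℓ).factorial)
          * ((ℓ - 1 + t).choose t * (ℓ - 1 + (d - ℓ - t)).choose (d - ℓ - t)) := by
    intro t ht
    rw [Finset.mem_range] at ht
    have ht' : t ≤ d - ℓ := by omega
    have e1 : ℓ + t - 1 = ℓ - 1 + t := by omega
    have e2 : d - t - 1 = ℓ - 1 + (d - ℓ - t) := by omega
    have f1 : (ℓ - 1 + t).choose t * t.factorial * (ℓ - 1).factorial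
        = (ℓ - 1 + t).factorial := by
      have h := Nat.choose_mul_factorial_mul_factorial (show t ≤ ℓ - 1 + t by omega)
      rwa [show ℓ - 1 + t - t = ℓ - 1 by omega] at h
    have f2 : (ℓ - 1 + (d - ℓ - t)).choose (d - ℓ - t) * (d - ℓ - t).factorial
          * (ℓ - 1).factorial = (ℓ - 1 + (d - ℓ - t)).factorial := by
      have h := Nat.choose_mul_factorial_mul_factorial
        (show d - ℓ - t ≤ ℓ - 1 + (d - ℓ - t) by omega)
      rwa [show ℓ - 1 + (d - ℓ - t) - (d - ℓ - t) = ℓ - 1 by omega] at h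
    have f3 : (d - ℓ).choose t * t.factorial * (d - ℓ - t).factorial
        = (d - ℓ).factorial := Nat.choose_mul_factorial_mul_factorial ht'
    rw [e1, e2, ← f1, ← f2, ← f3]
    ring
  rw [Finset.sum_congr rfl step, ← Finset.mul_sum, hconv]
  have hfin : (ℓ - 1 + (ℓ - 1) + (d - ℓ) + 1).choose (d - ℓ) * (d - ℓ).factorial
      * (2 * ℓ - 1).factorial = (d + ℓ - 1).factorial := by
    have h := Nat.choose_mul_factorial_mul_factorial
      (show d - ℓ ≤ d + ℓ - 1 by omega)
    rw [show d + ℓ - 1 - (d - ℓ) = 2 * ℓ - 1 by omega] at h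
    rw [show ℓ - 1 + (ℓ - 1) + (d - ℓ) + 1 = d + ℓ - 1 by omega]
    exact h
  calc (2 * ℓ - 1).factorial * (ℓ - 1).factorial ^ 2 * (d - ℓ).factorial
        * (ℓ - 1 + (ℓ - 1) + (d - ℓ) + 1).choose (d - ℓ)
      = (ℓ - 1).factorial ^ 2 * ((ℓ - 1 + (ℓ - 1) + (d - ℓ) + 1).choose (d - ℓ)
          * (d - ℓ).factorial * (2 * ℓ - 1).factorial) := by ring
    _ = (ℓ - 1).factorial ^ 2 * (d + ℓ - 1).factorial := by rw [hfin]

/-- the constants `p^ℓ_t` sum to one: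
`Σ_{t=0}^{d−ℓ} C(d−ℓ,t) p^ℓ_t = 1`. -/
theorem cardinal_probabilistic_weights_sum_to_one (d ℓ : ℕ) (h1 : 1 ≤ ℓ) (h2 : ℓ ≤ d) :
    ∑ t ∈ Finset.range (d - ℓ + 1),
      ((d - ℓ).choose t : ℝ) *
        (((2 * ℓ - 1).factorial : ℝ) * ((ℓ + t - 1).factorial : ℝ) *
            ((d - t - 1).factorial : ℝ) /
          ((((ℓ - 1).factorial : ℝ)) ^ 2 * ((d + ℓ - 1).factorial : ℝ))) = 1 := by
  have hden : (((ℓ - 1).factorial : ℝ)) ^ 2 * ((d + ℓ - 1).factorial : ℝ) ≠ 0 := by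
    positivity
  have hterm : ∀ t ∈ Finset.range (d - ℓ + 1),
      ((d - ℓ).choose t : ℝ) *
        (((2 * ℓ - 1).factorial : ℝ) * ((ℓ + t - 1).factorial : ℝ) *
            ((d - t - 1).factorial : ℝ) /
          ((((ℓ - 1).factorial : ℝ)) ^ 2 * ((d + ℓ - 1).factorial : ℝ)))
        = (((d - ℓ).choose t * ((2 * ℓ - 1).factorial * (ℓ + t - 1).factorial
            * (d - t - 1).factorial) : ℕ) : ℝ) /
          ((((ℓ - 1).factorial : ℝ)) ^ 2 * ((d + ℓ - 1).factorial : ℝ)) := by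
    intro t _
    push_cast
    ring
  rw [Finset.sum_congr rfl hterm, ← Finset.sum_div, ← Nat.cast_sum,
    key_nat_sum d ℓ h1 h2]
  push_cast
  rw [div_self hden]
end

section
/- For natural numbers a, b ≥ 0, the antiderivative g(x) = ∫_0^x t^a (1−t)^b dt can be written as g(x) = (1−x)^{b+1}·p(x) + a!/∏_{k=0}^{a}(b+k+1), where p is a polynomial of degree at most a. -/
/-!
Integrating by parts against `(1 - t)^b = d/dt (-(1 - t)^(b+1) / (b+1))` gives
`∫₀ˣ t^(a+1) (1-t)^b = -x^(a+1) (1-x)^(b+1) / (b+1) + (a+1)/(b+1) ∫₀ˣ t^a (1-t)^(b+1)`,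
so induction on `a` (for all `b` at once) transports the shape `(1 - x)^(b+1) p(x) + c` from
`b + 1` to `b`, raising the degree of `p` by one. The constant obeys
`c(a+1, b) = (a+1)/(b+1) · c(a, b+1)`, which is the recursion of `a! / ∏_{k ≤ a} (b+k+1)`.
-/

open Polynomial

theorem integral_one_sub_pow (b : ℕ) (x : ℝ) :
    ∫ t in (0:ℝ)..x, (1 - t) ^ b = (1 - (1 - x) ^ (b + 1)) / (b + 1) := by
  rw [intervalIntegral.integral_comp_sub_left (· ^ b), integral_pow]
  simp

theorem integral_pow_succ_mul_one_sub_pow (a b : ℕ) (x : ℝ) :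
    ∫ t in (0:ℝ)..x, t ^ (a + 1) * (1 - t) ^ b =
      -(x ^ (a + 1) * (1 - x) ^ (b + 1)) / (b + 1) +
        (a + 1) / (b + 1) * ∫ t in (0:ℝ)..x, t ^ a * (1 - t) ^ (b + 1) := by
  have hb : (b : ℝ) + 1 ≠ 0 := by positivity
  have hu (t : ℝ) : HasDerivAt (· ^ (a + 1)) ((a + 1) * t ^ a) t := by
    simpa using hasDerivAt_pow (a + 1) t
  have hv (t : ℝ) : HasDerivAt (fun s : ℝ => -(1 - s) ^ (b + 1) / (b + 1)) ((1 - t) ^ b) t := by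
    refine ((((hasDerivAt_id' t).const_sub 1).fun_pow (b + 1)).neg.div_const _).congr_deriv ?_
    push_cast
    field_simp
  have hu'v (t : ℝ) : (a + 1) * t ^ a * (-(1 - t) ^ (b + 1) / (b + 1)) =
      -((a + 1) / (b + 1)) * (t ^ a * (1 - t) ^ (b + 1)) := by
    ring
  rw [intervalIntegral.integral_mul_deriv_eq_deriv_mul (fun t _ => hu t) (fun t _ => hv t)
    ((by fun_prop : Continuous _).intervalIntegrable _ _)
    ((by fun_prop : Continuous _).intervalIntegrable _ _)]
  simp only [hu'v, intervalIntegral.integral_const_mul, zero_pow a.succ_ne_zero, zero_mul,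
    sub_zero]
  ring

theorem factorial_div_prod_succ (a b : ℕ) :
    ((a + 1).factorial : ℝ) / ∏ k ∈ Finset.range (a + 2), ((b : ℝ) + k + 1) =
      (a + 1) / (b + 1) *
        ((a.factorial : ℝ) / ∏ k ∈ Finset.range (a + 1), (((b + 1 : ℕ) : ℝ) + k + 1)) := by
  rw [Finset.prod_range_succ', Nat.factorial_succ]
  push_cast
  rw [div_mul_div_comm]
  congr 1
  rw [mul_comm]
  congr 1
  · ring
  · exact Finset.prod_congr rfl fun k _ => by ring

theorem natDegree_C_mul_X_pow_add_C_mul_one_sub_X_mul_le {R : Type*} [Ring R] (c d : R)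
    {n : ℕ} {q : R[X]} (hq : q.natDegree ≤ n) :
    (C c * X ^ (n + 1) + C d * ((1 - X) * q)).natDegree ≤ n + 1 := by
  refine natDegree_add_le_of_degree_le (natDegree_C_mul_X_pow_le c _) ?_
  refine (natDegree_C_mul_le d _).trans ?_
  rw [add_comm n]
  refine natDegree_mul_le_of_le ?_ hq
  compute_degree!

/-- the antiderivative `∫_0^x t^a (1−t)^b dt` equals
`(1−x)^{b+1} p(x) + a!/∏_{k=0}^{a}(b+k+1)` for some polynomial `p` of degree ≤ a. -/
theorem antiderivative_closed_form (a b : ℕ) :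
    ∃ p : Polynomial ℝ, p.natDegree ≤ a ∧
      ∀ x : ℝ, (∫ t in (0:ℝ)..x, t ^ a * (1 - t) ^ b) =
        (1 - x) ^ (b + 1) * p.eval x +
          (a.factorial : ℝ) / ∏ k ∈ Finset.range (a + 1), ((b : ℝ) + k + 1) := by
  induction a generalizing b with
  | zero =>
    refine ⟨C (-1 / ((b : ℝ) + 1)), by simp, fun x => ?_⟩
    simp only [pow_zero, one_mul, integral_one_sub_pow, eval_C, Nat.factorial_zero, zero_add,
      Finset.prod_range_one]
    push_cast
    ring
  | succ a ih =>
    obtain ⟨q, hq_deg, hq⟩ := ih (b + 1)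
    refine ⟨C (-1 / ((b : ℝ) + 1)) * X ^ (a + 1) + C (((a : ℝ) + 1) / (b + 1)) * ((1 - X) * q),
      natDegree_C_mul_X_pow_add_C_mul_one_sub_X_mul_le _ _ hq_deg, fun x => ?_⟩
    rw [integral_pow_succ_mul_one_sub_pow, hq, factorial_div_prod_succ]
    simp only [eval_add, eval_mul, eval_C, eval_pow, eval_X, eval_sub, eval_one]
    push_cast
    ring
end

section
/- Let 1 ≤ ℓ < r be integers, and let t', p', ρ be integers with 0 ≤ t' ≤ ℓ, 0 ≤ p' ≤ ℓ, 0 ≤ ρ ≤ t'. Then Σ_{σ=0}^{t'−ρ} C(t',σ)(−1)^σ C(t'−σ, ρ) C(r−t'+σ, p'−ρ) equals 0 if p' < t', and equals (−1)^{t'−ρ} C(r−t', p'−t') C(t', ρ) if t' ≤ p' ≤ ℓ. -/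
/-!
Since `C(t', σ) C(t' - σ, ρ) = C(t', ρ) C(t' - ρ, σ)`, `C(t', ρ)` factors out of the sum,
and what remains is `(-1)^m` times the `m`-th forward difference of `x ↦ C(x, k)` at `x = r - t'`,
with `m = t' - ρ` and `k = p' - ρ`. Iterating Pascal's rule gives `Δ^m C(x, k) = C(x, k - m)`
for `m ≤ k`, and `0` for `m > k` since then `C(x, k)` is a polynomial of degree `< m`.
-/

open Finset fwdDiff

lemma Nat.choose_mul_choose_sub_comm (n a b : ℕ) :
    n.choose a * (n - a).choose b = n.choose b * (n - b).choose a := by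
  have hab := Nat.choose_mul (n := n) (Nat.le_add_right a b)
  have hba := Nat.choose_mul (n := n) (Nat.le_add_left b a)
  rw [Nat.add_sub_cancel_left] at hab
  rw [Nat.add_sub_cancel] at hba
  rw [← hab, ← hba, Nat.choose_symm_add]

lemma fwdDiff_iter_choose_eq_ite (m k : ℕ) :
    (fwdDiff 1)^[m] (fun x ↦ x.choose k : ℕ → ℤ) =
      fun x ↦ if k < m then 0 else x.choose (k - m) := by
  rcases lt_or_ge k m with hkm | hmk
  · obtain ⟨j, rfl⟩ := Nat.exists_eq_add_of_lt hkm
    have hconst : (fwdDiff 1)^[k] (fun x ↦ x.choose k : ℕ → ℤ) = fun _ ↦ 1 := by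
      simpa using fwdDiff_iter_choose 0 k
    simp only [if_pos hkm]
    rw [show k + j + 1 = j + (1 + k) by ring, Function.iterate_add_apply,
      Function.iterate_add_apply, hconst, Function.iterate_one, fwdDiff_const,
      Function.iterate_fixed (fwdDiff_const 1 0)]
  · obtain ⟨j, rfl⟩ := Nat.exists_eq_add_of_le hmk
    simp [fwdDiff_iter_choose]

lemma alternating_sum_choose_mul_add_choose (N m k : ℕ) :
    ∑ σ ∈ range (m + 1), (-1 : ℤ) ^ σ * m.choose σ * (N + σ).choose k =
      if k < m then 0 else (-1 : ℤ) ^ m * N.choose (k - m) := by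
  have h := fwdDiff_iter_eq_sum_shift 1 (fun x ↦ (x.choose k : ℤ)) m N
  rw [fwdDiff_iter_choose_eq_ite] at h
  beta_reduce at h
  have hite : (if k < m then 0 else (-1 : ℤ) ^ m * N.choose (k - m)) =
      (-1) ^ m * (if k < m then 0 else (N.choose (k - m) : ℤ)) := by
    split_ifs <;> simp
  rw [hite, h, mul_sum]
  refine sum_congr rfl fun σ hσ ↦ ?_
  have hσm : σ ≤ m := Nat.lt_succ_iff.mp (mem_range.mp hσ)
  have hsign : (-1 : ℤ) ^ m * (-1) ^ (m - σ) = (-1) ^ σ := by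
    rw [← pow_add, show m + (m - σ) = σ + 2 * (m - σ) by omega, pow_add, pow_mul]
    simp
  rw [smul_eq_mul, smul_eq_mul, mul_one, ← hsign]
  ring

/-- The `if ρ ≤ p'` stands for `C(r - t' + σ, p' - ρ) = 0` when `p' < ρ`, which truncated
subtraction would otherwise turn into `C(r - t' + σ, 0) = 1`. -/
theorem alternating_binomial_identity_general (r t' p' ρ : ℕ) :
    (∑ σ ∈ Finset.range (t' - ρ + 1),
        (t'.choose σ : ℝ) * (-1) ^ σ * ((t' - σ).choose ρ : ℝ) *
          (if ρ ≤ p' then ((r - t' + σ).choose (p' - ρ) : ℝ) else 0)) =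
      if p' < t' then 0
      else (-1 : ℝ) ^ (t' - ρ) * ((r - t').choose (p' - t') : ℝ) * (t'.choose ρ : ℝ) := by
  rcases lt_or_ge t' ρ with htρ | hρt
  · simp [Nat.sub_eq_zero_of_le htρ.le, Nat.choose_eq_zero_of_lt htρ]
  by_cases hρp : ρ ≤ p'
  · have hsum := alternating_sum_choose_mul_add_choose (r - t') (t' - ρ) (p' - ρ)
    have hterm : ∀ σ, (t'.choose σ : ℝ) * (-1) ^ σ * ((t' - σ).choose ρ : ℝ) *
        ((r - t' + σ).choose (p' - ρ) : ℝ) = (t'.choose ρ : ℝ) *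
          ((-1) ^ σ * ((t' - ρ).choose σ : ℝ) * ((r - t' + σ).choose (p' - ρ) : ℝ)) := by
      intro σ
      have := congrArg (Nat.cast : ℕ → ℝ) (Nat.choose_mul_choose_sub_comm t' σ ρ)
      push_cast at this
      linear_combination (-1) ^ σ * ((r - t' + σ).choose (p' - ρ) : ℝ) * this
    simp only [if_pos hρp, hterm, ← mul_sum]
    have hsumR := congrArg (Int.cast : ℤ → ℝ) hsum
    push_cast at hsumR
    rw [hsumR]
    by_cases hpt : p' < t'
    · simp [hpt, show p' - ρ < t' - ρ by omega]
    · rw [if_neg hpt, if_neg (by omega), show p' - ρ - (t' - ρ) = p' - t' by omega]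
      ring
  · simp [hρp, show p' < t' by omega]

/-- the alternating binomial sum identity of Claim `I_value`.
Binomial coefficients with a negative lower index (which can only occur in
`C(r−t'+σ, p'−ρ)` when `p' < ρ`) are interpreted as `0`. -/
theorem alternating_binomial_identity (ℓ r t' p' ρ : ℕ)
    (h1 : 1 ≤ ℓ) (h2 : ℓ < r) (h3 : t' ≤ ℓ) (h4 : p' ≤ ℓ) (h5 : ρ ≤ t') :
    (∑ σ ∈ Finset.range (t' - ρ + 1),
        (t'.choose σ : ℝ) * (-1) ^ σ * ((t' - σ).choose ρ : ℝ) *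
          (if ρ ≤ p' then ((r - t' + σ).choose (p' - ρ) : ℝ) else 0)) =
      if p' < t' then 0
      else (-1 : ℝ) ^ (t' - ρ) * ((r - t').choose (p' - t') : ℝ) * (t'.choose ρ : ℝ) :=
  alternating_binomial_identity_general r t' p' ρ
end

section
/- Let d ≥ 1 and define the Shapley kernel weights μ_i = (d−1)/(C(d,i)·i·(d−i)) for 1 ≤ i ≤ d−1 and μ_d = 0. Define μ̄_p = Σ_{i=p}^{d−1} C(d−p, i−p)·μ_i for 1 ≤ p ≤ d−1. Then μ̄_p − μ̄_{p+1} = (d−1)/(d·p) for all 1 ≤ p ≤ d−1 (with μ̄_d = 0). -/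
/-! Write `p = q + 1` and `d = n + q + 2`. Pascal's rule collapses `μ̄_p − μ̄_{p+1}` to
`∑_{k ≤ n} C(n,k) μ_{p+k}`. Since
`C(d,i)·i·(d−i) = d(d−1)·C(d−2,i−1)`, trinomial revision makes the `k`-th term proportional to
`C(q+k,q)`, and the hockey-stick identity sums these to `C(n+q+1,q+1) = (n+q+1)/(q+1)·C(n+q,q)`. -/

open Finset

namespace Nat

theorem choose_succ_mul_succ_mul_succ (j k : ℕ) :
    (j + k + 2).choose (j + 1) * (j + 1) * (k + 1) =
      (j + k + 2) * (j + k + 1) * (j + k).choose j := by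
  have h := choose_mul_succ_eq (j + k) j
  rw [show j + k + 1 - j = k + 1 by omega] at h
  rw [← add_one_mul_choose_eq, mul_assoc, ← h]
  ring

theorem choose_mul_add_two_mul_add_one_mul_choose (q k m : ℕ) :
    (k + m).choose k * ((q + k + m + 2) * (q + k + m + 1) * (q + k + m).choose q) =
      (k + q).choose q * ((q + k + m + 2).choose (q + k + 1) * (q + k + 1) * (m + 1)) := by
  have h := choose_mul (n := q + k + m) (k := q + k) (s := q) (by omega)
  rw [show q + k + m - q = k + m by omega, Nat.add_sub_cancel_left] at h
  rw [choose_succ_mul_succ_mul_succ, add_comm k q]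
  zify at h ⊢
  linear_combination (-((q + k + m + 2) * (q + k + m + 1)) : ℤ) * h

end Nat

theorem Finset.sum_range_succ_choose_mul {R : Type*} [Semiring R] (n : ℕ) (g : ℕ → R) :
    ∑ k ∈ range (n + 2), ((n + 1).choose k : R) * g k =
      ∑ k ∈ range (n + 1), (n.choose k : R) * g k +
        ∑ k ∈ range (n + 1), (n.choose k : R) * g (k + 1) := by
  calc ∑ k ∈ range (n + 2), ((n + 1).choose k : R) * g k
      = (∑ k ∈ range (n + 1), (n.choose (k + 1) : R) * g (k + 1) + (n.choose 0 : R) * g 0) +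
          ∑ k ∈ range (n + 1), (n.choose k : R) * g (k + 1) := by
        rw [sum_range_succ']
        simp only [Nat.choose_succ_succ, Nat.cast_add, add_mul, sum_add_distrib,
          Nat.choose_zero_right]
        abel
    _ = _ := by
        rw [← sum_range_succ' (fun k => (n.choose k : R) * g k), sum_range_succ _ (n + 1),
          Nat.choose_succ_self, Nat.cast_zero, zero_mul, add_zero]

theorem Finset.sum_Icc_choose_sub_mul {R : Type*} [Semiring R] {p d n : ℕ} (h : d = p + n)
    (f : ℕ → R) :
    ∑ i ∈ Icc p d, ((d - p).choose (i - p) : R) * f i =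
      ∑ k ∈ range (n + 1), (n.choose k : R) * f (p + k) := by
  subst h
  rw [← Ico_add_one_right_eq_Icc, sum_Ico_eq_sum_range, add_assoc, Nat.add_sub_cancel_left]
  simp only [Nat.add_sub_cancel_left]

theorem choose_div_choose_mul_mul_eq (q : ℕ) {n k : ℕ} (hk : k ≤ n) :
    (n.choose k : ℝ) / ((n + q + 2).choose (q + k + 1) * (q + k + 1) * (n - k + 1)) =
      (k + q).choose q / ((n + q + 2) * (n + q + 1) * (n + q).choose q) := by
  obtain ⟨m, rfl⟩ := Nat.exists_eq_add_of_le hk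
  have hchoose : ((k + m + q + 2).choose (q + k + 1) : ℝ) ≠ 0 :=
    Nat.cast_ne_zero.mpr (Nat.choose_pos (by omega)).ne'
  have hchoose' : ((k + m + q).choose q : ℝ) ≠ 0 :=
    Nat.cast_ne_zero.mpr (Nat.choose_pos (by omega)).ne'
  rw [div_eq_div_iff (by push_cast; simp only [add_sub_cancel_left]; positivity) (by positivity)]
  have h := congrArg (Nat.cast : ℕ → ℝ) (Nat.choose_mul_add_two_mul_add_one_mul_choose q k m)
  rw [show q + k + m = k + m + q by ring] at h
  push_cast at h ⊢
  linear_combination h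

theorem sum_choose_div_choose_mul_mul (n q : ℕ) :
    ∑ k ∈ range (n + 1),
        (n.choose k : ℝ) / ((n + q + 2).choose (q + k + 1) * (q + k + 1) * (n - k + 1)) =
      1 / ((n + q + 2) * (q + 1)) := by
  rw [sum_congr rfl fun k hk => choose_div_choose_mul_mul_eq q (mem_range_succ_iff.mp hk),
    ← sum_div]
  have hockey : ∑ k ∈ range (n + 1), ((k + q).choose q : ℝ) = (n + q + 1).choose (q + 1) := by
    exact_mod_cast Nat.sum_range_add_choose n q
  have absorb :
      ((n + q + 1 : ℕ) : ℝ) * (n + q).choose q = (n + q + 1).choose (q + 1) * (q + 1) := by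
    exact_mod_cast Nat.add_one_mul_choose_eq (n + q) q
  have hchoose : ((n + q).choose q : ℝ) ≠ 0 := Nat.cast_ne_zero.mpr (Nat.choose_pos (by omega)).ne'
  rw [hockey]
  field_simp
  push_cast at absorb
  linear_combination -absorb

theorem shapley_kernel_cumulative_difference_general (d : ℕ)
    (μ μbar : ℕ → ℝ)
    (hμ : ∀ i, 1 ≤ i → i ≤ d - 1 →
      μ i = ((d : ℝ) - 1) / ((d.choose i : ℝ) * (i : ℝ) * ((d : ℝ) - (i : ℝ))))
    (hbar : ∀ p, 1 ≤ p → p ≤ d →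
      μbar p = ∑ i ∈ Finset.Icc p d, ((d - p).choose (i - p) : ℝ) * μ i) :
    ∀ p, 1 ≤ p → p ≤ d - 1 →
      μbar p - μbar (p + 1) = ((d : ℝ) - 1) / ((d : ℝ) * (p : ℝ)) := by
  intro p hp hpd
  obtain ⟨q, rfl⟩ : ∃ q, p = q + 1 := ⟨p - 1, by omega⟩
  obtain ⟨n, rfl⟩ : ∃ n, d = n + q + 2 := ⟨d - q - 2, by omega⟩
  rw [hbar _ hp (by omega), hbar _ (by omega) (by omega),
    sum_Icc_choose_sub_mul (n := n + 1) (by omega), sum_Icc_choose_sub_mul (n := n) (by omega),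
    sum_range_succ_choose_mul]
  have hshift : ∀ k ∈ range (n + 1), (n.choose k : ℝ) * μ (q + 1 + (k + 1)) =
      n.choose k * μ (q + 1 + 1 + k) := fun k _ => by
    rw [show q + 1 + (k + 1) = q + 1 + 1 + k by omega]
  rw [sum_congr rfl hshift, add_sub_cancel_right]
  have hterm : ∀ k ∈ range (n + 1), (n.choose k : ℝ) * μ (q + 1 + k) = (n + q + 1) *
      ((n.choose k : ℝ) / ((n + q + 2).choose (q + k + 1) * (q + k + 1) * (n - k + 1))) := by
    intro k hk
    rw [hμ _ (by omega) (by have := mem_range_succ_iff.mp hk; omega), add_right_comm q 1 k]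
    push_cast
    ring
  rw [sum_congr rfl hterm, ← mul_sum, sum_choose_div_choose_mul_mul]
  push_cast
  field_simp
  ring

/-- for the Shapley kernel weights, `μ̄_p − μ̄_{p+1} = (d−1)/(d·p)`. -/
theorem shapley_kernel_cumulative_difference (d : ℕ) (hd : 2 ≤ d)
    (μ μbar : ℕ → ℝ)
    (hμ : ∀ i, 1 ≤ i → i ≤ d - 1 →
      μ i = ((d : ℝ) - 1) / ((d.choose i : ℝ) * (i : ℝ) * ((d : ℝ) - (i : ℝ))))
    (hμd : μ d = 0)
    (hbar : ∀ p, 1 ≤ p → p ≤ d →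
      μbar p = ∑ i ∈ Finset.Icc p d, ((d - p).choose (i - p) : ℝ) * μ i) :
    ∀ p, 1 ≤ p → p ≤ d - 1 →
      μbar p - μbar (p + 1) = ((d : ℝ) - 1) / ((d : ℝ) * (p : ℝ)) :=
  shapley_kernel_cumulative_difference_general d μ μbar hμ hbar
end

section
/- Let d ≥ 2 and the Shapley kernel weights μ_i = (d−1)/(C(d,i)·i·(d−i)) for 1 ≤ i ≤ d−1, μ_d = 0, with cumulative weights μ̄_p = Σ_{i=p}^{d} C(d−p, i−p) μ_i and D^p_q = Σ_{j=0}^{q} C(q,j)(−1)^j μ̄_{p+j}. Then for all p, q ≥ 1 with p+q ≤ d, D^p_q = (d−1)/(d·q·C(p+q−1, p−1)). -/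
/-!
Pascal's rule makes `S_c(f; n, p) = ∑_j C(n, j) c^j f(p + j)` (`binomialSum c f n p`) satisfy
`S_c(n + 1, p) = S_c(n, p) + c • S_c(n, p + 1)`. Since `μ̄_p = S_1(μ; d - p, p)` and
`D^p_q = S_{-1}(μ̄; q, p)`, induction on `q` gives `D^p_q = S_1(μ; d - p - q, p)`.
The Shapley weights are Beta values, `μ_i = (d - 1)/d • B(i, d - i)`, and the Beta recurrence
`B(p, q) = B(p + 1, q) + B(p, q + 1)` is the same Pascal rule, so induction on `d - p - q` yields
`D^p_q = (d - 1)/d • B(p, q) = (d - 1)/(d q C(p + q - 1, p - 1))`.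
-/

open Finset Nat

section BinomialSum

variable {R : Type*} [CommRing R]

def binomialSum (c : R) (f : ℕ → R) (n p : ℕ) : R :=
  ∑ j ∈ range (n + 1), (n.choose j : R) * c ^ j * f (p + j)

theorem binomialSum_zero (c : R) (f : ℕ → R) (p : ℕ) : binomialSum c f 0 p = f p := by
  simp [binomialSum]

theorem binomialSum_succ (c : R) (f : ℕ → R) (n p : ℕ) :
    binomialSum c f (n + 1) p = binomialSum c f n p + c * binomialSum c f n (p + 1) := by
  have hlow : binomialSum c f n p
      = ∑ j ∈ range (n + 1), (n.choose (j + 1) : R) * c ^ (j + 1) * f (p + (j + 1)) + f p := by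
    rw [binomialSum, sum_range_succ', sum_range_succ _ n, choose_succ_self]
    simp
  have hshift : c * binomialSum c f n (p + 1)
      = ∑ j ∈ range (n + 1), (n.choose j : R) * c ^ (j + 1) * f (p + (j + 1)) := by
    rw [binomialSum, mul_sum]
    exact sum_congr rfl fun j _ => by rw [add_assoc, add_comm 1 j]; ring
  rw [hlow, hshift, binomialSum, sum_range_succ']
  simp only [choose_succ_succ, cast_add, add_mul, sum_add_distrib, choose_zero_right, cast_one,
    pow_zero, one_mul, add_zero]
  ring

theorem sum_Icc_choose_eq_binomialSum (f : ℕ → R) {p d : ℕ} (h : p ≤ d) :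
    ∑ i ∈ Icc p d, ((d - p).choose (i - p) : R) * f i = binomialSum 1 f (d - p) p := by
  rw [← Ico_add_one_right_eq_Icc, sum_Ico_eq_sum_range, binomialSum, Nat.sub_add_comm h]
  simp

theorem binomialSum_neg_one_eq {f g : ℕ → R} {a d : ℕ}
    (hg : ∀ p, a ≤ p → p ≤ d → g p = binomialSum 1 f (d - p) p) :
    ∀ q p, a ≤ p → p + q ≤ d → binomialSum (-1) g q p = binomialSum 1 f (d - p - q) p := by
  intro q
  induction q with
  | zero => intro p hp hpd; simpa [binomialSum_zero] using hg p hp (by omega)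
  | succ q ih =>
    intro p hp hpd
    rw [binomialSum_succ, ih p hp (by omega), ih (p + 1) (by omega) (by omega),
      show d - p - q = d - p - (q + 1) + 1 by omega,
      show d - (p + 1) - q = d - p - (q + 1) by omega, binomialSum_succ]
    ring

end BinomialSum

/-- The Beta value `B(a + 1, b + 1)`. -/
noncomputable def betaNat (a b : ℕ) : ℝ := (a ! * b ! : ℝ) / (a + b + 1)!

theorem betaNat_eq_one_div (a b : ℕ) :
    betaNat a b = 1 / ((b + 1 : ℝ) * ((a + b + 1).choose a : ℕ)) := by
  have h := add_choose_mul_factorial_mul_factorial (b + 1) a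
  rw [show b + 1 + a = a + b + 1 by ring, factorial_succ b] at h
  rw [betaNat, ← h]
  push_cast
  field_simp

theorem betaNat_eq_add (a b : ℕ) : betaNat a b = betaNat (a + 1) b + betaNat a (b + 1) := by
  simp only [betaNat, show a + 1 + b + 1 = a + b + 1 + 1 by ring,
    show a + (b + 1) + 1 = a + b + 1 + 1 by ring, factorial_succ]
  push_cast
  field_simp
  ring

theorem div_choose_mul_mul_sub_eq_betaNat {d i : ℕ} (hi : 1 ≤ i) (hid : i < d) :
    ((d : ℝ) - 1) / ((d.choose i : ℝ) * i * ((d : ℝ) - i))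
      = ((d : ℝ) - 1) / d * betaNat (i - 1) (d - i - 1) := by
  obtain ⟨a, rfl⟩ : ∃ a, i = a + 1 := ⟨i - 1, by omega⟩
  obtain ⟨b, rfl⟩ : ∃ b, d = a + b + 2 := ⟨d - a - 2, by omega⟩
  have h := add_choose_mul_factorial_mul_factorial (b + 1) (a + 1)
  have hfac : (a + b + 2)! = (a + b + 2) * (a + b + 1)! := factorial_succ _
  rw [show b + 1 + (a + 1) = a + b + 2 by ring, hfac, factorial_succ b, factorial_succ a] at h
  have hchoose : ((a + b + 2).choose (a + 1) : ℝ)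
      = (a + b + 2) * (a + b + 1)! / ((b + 1) * b ! * ((a + 1) * a !)) := by
    rw [eq_div_iff (by positivity)]
    exact_mod_cast (by rw [← h]; ring)
  have hsub : ((a + b + 2 : ℕ) : ℝ) - (a + 1 : ℕ) = b + 1 := by push_cast; ring
  rw [betaNat, show a + 1 - 1 = a by omega, show a + b + 2 - (a + 1) - 1 = b by omega, hchoose,
    hsub]
  push_cast
  field_simp

theorem binomialSum_one_eq_betaNat {d : ℕ} {μ : ℕ → ℝ}
    (hμ : ∀ i, 1 ≤ i → i ≤ d - 1 →
      μ i = ((d : ℝ) - 1) / ((d.choose i : ℝ) * (i : ℝ) * ((d : ℝ) - (i : ℝ)))) :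
    ∀ n p, 1 ≤ p → p + n < d →
      binomialSum 1 μ n p = ((d : ℝ) - 1) / d * betaNat (p - 1) (d - p - n - 1) := by
  intro n
  induction n with
  | zero =>
    intro p hp hpd
    rw [binomialSum_zero, hμ p hp (by omega), div_choose_mul_mul_sub_eq_betaNat hp (by omega)]
    rfl
  | succ n ih =>
    intro p hp hpd
    rw [binomialSum_succ, one_mul, ih p hp (by omega), ih (p + 1) (by omega) (by omega),
      ← mul_add, betaNat_eq_add (p - 1) (d - p - (n + 1) - 1),
      show p - 1 + 1 = p + 1 - 1 by omega, show d - p - (n + 1) - 1 + 1 = d - p - n - 1 by omega,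
      show d - (p + 1) - n - 1 = d - p - (n + 1) - 1 by omega, add_comm]

theorem shapley_kernel_D_value_general (d : ℕ)
    (μ μbar : ℕ → ℝ) (D : ℕ → ℕ → ℝ)
    (hμ : ∀ i, 1 ≤ i → i ≤ d - 1 →
      μ i = ((d : ℝ) - 1) / ((d.choose i : ℝ) * (i : ℝ) * ((d : ℝ) - (i : ℝ))))
    (hbar : ∀ p, 1 ≤ p → p ≤ d →
      μbar p = ∑ i ∈ Finset.Icc p d, ((d - p).choose (i - p) : ℝ) * μ i)
    (hD : ∀ p q, 1 ≤ p → p + q ≤ d →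
      D p q = ∑ j ∈ Finset.range (q + 1), (q.choose j : ℝ) * (-1) ^ j * μbar (p + j)) :
    ∀ p q, 1 ≤ p → 1 ≤ q → p + q ≤ d →
      D p q = ((d : ℝ) - 1) / ((d : ℝ) * (q : ℝ) * ((p + q - 1).choose (p - 1) : ℝ)) := by
  intro p q hp hq hpq
  have hμbar : ∀ p, 1 ≤ p → p ≤ d → μbar p = binomialSum 1 μ (d - p) p := fun p hp hpd =>
    (hbar p hp hpd).trans (sum_Icc_choose_eq_binomialSum μ hpd)
  have hDp : D p q = binomialSum (-1) μbar q p := hD p q hp hpq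
  rw [hDp, binomialSum_neg_one_eq hμbar q p hp hpq,
    binomialSum_one_eq_betaNat hμ _ p hp (by omega),
    show d - p - (d - p - q) - 1 = q - 1 by omega, betaNat_eq_one_div,
    show p - 1 + (q - 1) + 1 = p + q - 1 by omega, cast_sub hq, cast_one, sub_add_cancel]
  field_simp

/-- for the Shapley kernel weights,
`D^p_q = (d−1)/(d·q·C(p+q−1,p−1))` for `p,q ≥ 1`, `p+q ≤ d`. -/
theorem shapley_kernel_D_value (d : ℕ) (hd : 2 ≤ d)
    (μ μbar : ℕ → ℝ) (D : ℕ → ℕ → ℝ)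
    (hμ : ∀ i, 1 ≤ i → i ≤ d - 1 →
      μ i = ((d : ℝ) - 1) / ((d.choose i : ℝ) * (i : ℝ) * ((d : ℝ) - (i : ℝ))))
    (hμd : μ d = 0)
    (hbar : ∀ p, 1 ≤ p → p ≤ d →
      μbar p = ∑ i ∈ Finset.Icc p d, ((d - p).choose (i - p) : ℝ) * μ i)
    (hD : ∀ p q, 1 ≤ p → p + q ≤ d →
      D p q = ∑ j ∈ Finset.range (q + 1), (q.choose j : ℝ) * (-1) ^ j * μbar (p + j)) :
    ∀ p q, 1 ≤ p → 1 ≤ q → p + q ≤ d →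
      D p q = ((d : ℝ) - 1) / ((d : ℝ) * (q : ℝ) * ((p + q - 1).choose (p - 1) : ℝ)) :=
  shapley_kernel_D_value_general d μ μbar D hμ hbar hD
end

section
/- Let a, b be reals with 1 ≥ a > b ≥ a² > 0. Define g(a,b,0) = 1 and g(a,b,i) = ∏_{j=0}^{i−1} (a(a−b)+j(b−a²))/((a−b)+j(b−a²)) for 1 ≤ i ≤ d. Then for every s with 0 ≤ s ≤ d, the alternating binomial sum Σ_{i=s}^{d} C(d−s, i−s)(−1)^{i−s} g(a,b,i) is strictly positive. -/
/-!
Writing `c = b - a²`, the factors of `g` are `(x - D) / x` evaluated along the arithmetic progression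
`x = (a - b) + j c`, with `D = (1 - a)(a - b)`. Hence `g (s + k) = g s · ∏_{j<k} (E + j c - D) / (E + j c)`
with `E = (a - b) + s c`, and a Chu–Vandermonde type identity collapses the alternating binomial sum of
these products to `∏_{k<n} (D + k c) / (E + k c)`, which is positive because `D > 0`, `E > 0`, `c ≥ 0`.
-/

open Finset

theorem sum_range_succ_choose_mul_neg_one_pow {R : Type*} [CommRing R] (u : ℕ → R) (n : ℕ) :
    ∑ k ∈ range (n + 2), ((n + 1).choose k : R) * (-1) ^ k * u k =
      ∑ k ∈ range (n + 1), (n.choose k : R) * (-1) ^ k * u k -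
        ∑ k ∈ range (n + 1), (n.choose k : R) * (-1) ^ k * u (k + 1) := by
  have := sum_choose_succ_mul (R := R) (fun k _ => (-1) ^ k * u k) n
  simp only [mul_assoc, pow_succ, mul_neg, neg_mul, one_mul, sum_neg_distrib] at this ⊢
  rw [this, sub_eq_add_neg]

theorem prod_range_succ_comp_add_mul {K M : Type*} [Semiring K] [CommMonoid M] (F : K → M)
    (E c : K) (k : ℕ) :
    ∏ j ∈ range (k + 1), F (E + j * c) = F E * ∏ j ∈ range k, F (E + c + j * c) := by
  rw [prod_range_succ', mul_comm, Nat.cast_zero, zero_mul, add_zero]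
  congr 1
  exact prod_congr rfl fun j _ => by rw [Nat.cast_succ, add_one_mul, add_comm _ c, ← add_assoc]

theorem sum_range_choose_mul_neg_one_pow_mul_prod_div {K : Type*} [Field K] {c D E : K}
    (hE : ∀ j : ℕ, E + j * c ≠ 0) (n : ℕ) :
    ∑ k ∈ range (n + 1), (n.choose k : K) * (-1) ^ k *
        ∏ j ∈ range k, (E + j * c - D) / (E + j * c) =
      ∏ k ∈ range n, (D + k * c) / (E + k * c) := by
  induction n generalizing E with
  | zero => simp
  | succ n ih =>
    have hE' : ∀ j : ℕ, E + c + j * c ≠ 0 := fun j => by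
      simpa [add_mul, add_assoc, add_comm c] using hE (j + 1)
    have hden := prod_range_succ_comp_add_mul id E c n
    have hterm (k : ℕ) : ∏ j ∈ range (k + 1), (E + j * c - D) / (E + j * c) =
        (E - D) / E * ∏ j ∈ range k, (E + c + j * c - D) / (E + c + j * c) :=
      prod_range_succ_comp_add_mul (fun x => (x - D) / x) E c k
    rw [sum_range_succ_choose_mul_neg_one_pow]
    simp only [hterm, mul_left_comm _ ((E - D) / E), ← mul_sum]
    rw [ih hE, ih hE', prod_div_distrib, prod_div_distrib, prod_div_distrib,
      prod_range_succ, prod_range_succ]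
    have h0 : E ≠ 0 := by simpa using hE 0
    have hB : ∏ k ∈ range n, (E + k * c) ≠ 0 := prod_ne_zero_iff.2 fun k _ => hE k
    have hB' : ∏ k ∈ range n, (E + c + k * c) ≠ 0 := prod_ne_zero_iff.2 fun k _ => hE' k
    have hn := hE n
    simp only [id, prod_range_succ] at hden
    generalize ∏ k ∈ range n, (D + k * c) = A
    generalize ∏ k ∈ range n, (E + k * c) = B at hB hden ⊢
    generalize ∏ k ∈ range n, (E + c + k * c) = B' at hB' hden ⊢
    field_simp
    linear_combination -(A * (E - D)) * hden

theorem sum_range_choose_mul_neg_one_pow_mul_prod_div_pos {K : Type*} [Field K] [LinearOrder K]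
    [IsStrictOrderedRing K] {c D E : K} (hc : 0 ≤ c) (hD : 0 < D) (hE : 0 < E) (n : ℕ) :
    0 < ∑ k ∈ range (n + 1), (n.choose k : K) * (-1) ^ k *
      ∏ j ∈ range k, (E + j * c - D) / (E + j * c) := by
  rw [sum_range_choose_mul_neg_one_pow_mul_prod_div fun j => by positivity]
  exact prod_pos fun k _ => by positivity

theorem alternating_sum_g_positive_general (d : ℕ) (a b : ℝ)
    (h2 : b < a) (h3 : a ^ 2 ≤ b)
    (g : ℕ → ℝ)
    (hg : ∀ i : ℕ, g i = ∏ j ∈ Finset.range i,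
      (a * (a - b) + (j : ℝ) * (b - a ^ 2)) / ((a - b) + (j : ℝ) * (b - a ^ 2))) :
    ∀ s ≤ d, 0 < ∑ i ∈ Finset.Icc s d,
      ((d - s).choose (i - s) : ℝ) * (-1) ^ (i - s) * g i := by
  intro s hs
  have ha : 0 < a := by nlinarith
  have ha1 : a < 1 := by nlinarith
  have hc : 0 ≤ b - a ^ 2 := by linarith
  have hg_pos : 0 < g s := by
    rw [hg s]
    exact prod_pos fun j _ => div_pos (by nlinarith) (by nlinarith)
  set E := a - b + s * (b - a ^ 2)
  have hg_add (k : ℕ) : g (s + k) = g s * ∏ j ∈ range k,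
      (E + j * (b - a ^ 2) - (1 - a) * (a - b)) / (E + j * (b - a ^ 2)) := by
    rw [hg, hg, prod_range_add]
    congr 1
    exact prod_congr rfl fun j _ => by simp only [E]; push_cast; congr 1 <;> ring
  rw [← Ico_add_one_right_eq_Icc, sum_Ico_eq_sum_range, show d + 1 - s = d - s + 1 by omega]
  simp only [Nat.add_sub_cancel_left, hg_add, mul_left_comm _ (g s), ← mul_sum]
  exact mul_pos hg_pos (sum_range_choose_mul_neg_one_pow_mul_prod_div_pos hc
    (mul_pos (by linarith) (by linarith)) (by positivity) _)

/-- positivity of the alternating binomial sums of `g(a,b,i)`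
under the condition `1 ≥ a > b ≥ a² > 0`. -/
theorem alternating_sum_g_positive (d : ℕ) (a b : ℝ)
    (h1 : a ≤ 1) (h2 : b < a) (h3 : a ^ 2 ≤ b) (h4 : 0 < a ^ 2)
    (g : ℕ → ℝ)
    (hg : ∀ i : ℕ, g i = ∏ j ∈ Finset.range i,
      (a * (a - b) + (j : ℝ) * (b - a ^ 2)) / ((a - b) + (j : ℝ) * (b - a ^ 2))) :
    ∀ s ≤ d, 0 < ∑ i ∈ Finset.Icc s d,
      ((d - s).choose (i - s) : ℝ) * (-1) ^ (i - s) * g i :=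
  alternating_sum_g_positive_general d a b h2 h3 g hg
end
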